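/- arXiv:1707.03295 — 6 statements merged into one kernel-verified Lean document; each statement's English description precedes it below -/
import Mathlib

section
/- Let C be a finite lattice of languages over a finite alphabet A (closed under finite union and intersection, containing ∅ and A*). Define the canonical preorder ≤_C on A* by w ≤_C w' iff for all L ∈ C, w ∈ L implies w' ∈ L. Then a language L ⊆ A* belongs to C if and only if L is an upper set for ≤_C (i.e., u ∈ L and u ≤_C v implies v ∈ L). -/
/-- A lattice of languages over `A`: contains `∅` and `A*`, closed under
finite union and finite intersection. -/
def IsLatticeClass {A : Type*} (C : Set (Set (List A))) : Prop :=
  ∅ ∈ C ∧ Set.univ ∈ C ∧ (∀ K L : Set (List A), K ∈ C → L ∈ C → K ∪ L ∈ C) ∧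
    (∀ K L : Set (List A), K ∈ C → L ∈ C → K ∩ L ∈ C)

/-- The canonical preorder associated to a class `C`:
`w ≤_C w'` iff every `L ∈ C` containing `w` also contains `w'`. -/
def CanPre {A : Type*} (C : Set (Set (List A))) (w w' : List A) : Prop :=
  ∀ L ∈ C, w ∈ L → w' ∈ L

/-!
The upper set of `u` for `≤_C` is the intersection of the members of `C` containing `u`;
as `C` is finite this intersection is finite, so it lies in `C`. An upper set `L` is the
union of the upper sets of its elements, a finite union since there are only finitely many
distinct ones, hence also in `C`.
-/

open Set

theorem sInter_mem_of_finite {α : Type*} {S : Set (Set α)} (huniv : univ ∈ S)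
    (hinter : ∀ K L : Set α, K ∈ S → L ∈ S → K ∩ L ∈ S)
    {D : Set (Set α)} (hD : D.Finite) (hsub : D ⊆ S) : ⋂₀ D ∈ S := by
  induction D, hD using Set.Finite.induction_on with
  | empty => simpa using huniv
  | @insert K D _ _ ih =>
    rw [sInter_insert]
    exact hinter _ _ (hsub (mem_insert _ _)) (ih ((subset_insert _ _).trans hsub))

theorem sUnion_mem_of_finite {α : Type*} {S : Set (Set α)} (hempty : ∅ ∈ S)
    (hunion : ∀ K L : Set α, K ∈ S → L ∈ S → K ∪ L ∈ S)
    {D : Set (Set α)} (hD : D.Finite) (hsub : D ⊆ S) : ⋃₀ D ∈ S := by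
  induction D, hD using Set.Finite.induction_on with
  | empty => simpa using hempty
  | @insert K D _ _ ih =>
    rw [sUnion_insert]
    exact hunion _ _ (hsub (mem_insert _ _)) (ih ((subset_insert _ _).trans hsub))

section

variable {A : Type*} {C : Set (Set (List A))}

theorem setOf_canPre_eq_sInter (u : List A) :
    {v | CanPre C u v} = ⋂₀ {M ∈ C | u ∈ M} := by
  ext v
  simp [CanPre, and_imp]

theorem IsLatticeClass.setOf_canPre_mem (hlat : IsLatticeClass C) (hfin : C.Finite)
    (u : List A) : {v | CanPre C u v} ∈ C := by
  rw [setOf_canPre_eq_sInter]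
  exact sInter_mem_of_finite hlat.2.1 hlat.2.2.2 (hfin.subset fun _ hM => hM.1)
    fun _ hM => hM.1

theorem eq_sUnion_setOf_canPre {L : Set (List A)}
    (hL : ∀ u v : List A, u ∈ L → CanPre C u v → v ∈ L) :
    L = ⋃₀ ((fun u => {v | CanPre C u v}) '' L) := by
  ext v
  simp only [sUnion_image, mem_iUnion, mem_ofPred_eq, exists_prop]
  exact ⟨fun hv => ⟨v, hv, fun _ _ h => h⟩, fun ⟨u, hu, huv⟩ => hL u v hu huv⟩

end

theorem stmt0_general {A : Type*} (C : Set (Set (List A)))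
    (hfin : C.Finite) (hlat : IsLatticeClass C) (L : Set (List A)) :
    L ∈ C ↔ ∀ u v : List A, u ∈ L → CanPre C u v → v ∈ L := by
  refine ⟨fun hL u v hu huv => huv L hL hu, fun hL => ?_⟩
  have himage : (fun u => {v | CanPre C u v}) '' L ⊆ C := by
    rintro _ ⟨u, -, rfl⟩
    exact hlat.setOf_canPre_mem hfin u
  rw [eq_sUnion_setOf_canPre hL]
  exact sUnion_mem_of_finite hlat.1 hlat.2.2.1 (hfin.subset himage) himage

/-- A language belongs to a finite lattice `C` iff it is an upper set for `≤_C`. -/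
theorem stmt0 {A : Type*} [Fintype A] (C : Set (Set (List A)))
    (hfin : C.Finite) (hlat : IsLatticeClass C) (L : Set (List A)) :
    L ∈ C ↔ ∀ u v : List A, u ∈ L → CanPre C u v → v ∈ L :=
  stmt0_general C hfin hlat L
end

section
/- Let C be a finite lattice of languages over a finite alphabet A. Then C is quotienting (closed under left and right quotients by words) if and only if the canonical preorder ≤_C is compatible with concatenation: for all words u, u', v, v', if u ≤_C u' and v ≤_C v' then uv ≤_C u'v'. -/
/-- `C` is quotienting: closed under left and right quotients by words. -/
def IsQuotienting {A : Type*} (C : Set (Set (List A))) : Prop :=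
  ∀ L ∈ C, ∀ w : List A, {u | w ++ u ∈ L} ∈ C ∧ {u | u ++ w ∈ L} ∈ C

/-!
Compatibility follows from quotienting by reading `uv ∈ L` as `v ∈ u⁻¹L` and then
`uv' ∈ L` as `u ∈ L v'⁻¹`. Conversely, compatibility makes every quotient of `L ∈ C` an
upper set of `≤_C`. In a finite lattice each word `w` has a least member of `C` containing
it, the intersection of all of them, which is exactly the upper set of `w`; so an upper set
`P` is the finite union of these over `w ∈ P` and lies in `C`.
-/

section CanonicalPreorder

variable {A : Type*} {C : Set (Set (List A))}

theorem IsLatticeClass.sInter_mem (hlat : IsLatticeClass C) {T : Set (Set (List A))}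
    (hT : T.Finite) (hTC : T ⊆ C) : ⋂₀ T ∈ C := by
  refine hT.induction_on_subset (motive := fun T _ => ⋂₀ T ∈ C) _ (by simpa using hlat.2.1) ?_
  intro K S hK _ _ ih
  rw [Set.sInter_insert]
  exact hlat.2.2.2 _ _ (hTC hK) ih

theorem IsLatticeClass.sUnion_mem (hlat : IsLatticeClass C) {T : Set (Set (List A))}
    (hT : T.Finite) (hTC : T ⊆ C) : ⋃₀ T ∈ C := by
  refine hT.induction_on_subset (motive := fun T _ => ⋃₀ T ∈ C) _ (by simpa using hlat.1) ?_
  intro K S hK _ _ ih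
  rw [Set.sUnion_insert]
  exact hlat.2.2.1 _ _ (hTC hK) ih

theorem IsQuotienting.canPre_append (hq : IsQuotienting C) {u u' v v' : List A}
    (hu : CanPre C u u') (hv : CanPre C v v') : CanPre C (u ++ v) (u' ++ v') := by
  intro L hL huv
  have huv' : u ++ v' ∈ L := hv _ (hq L hL u).1 huv
  exact hu _ (hq L hL v').2 huv'

def canUpperClosure (C : Set (Set (List A))) (w : List A) : Set (List A) :=
  ⋂₀ {K ∈ C | w ∈ K}

theorem mem_canUpperClosure_iff {w w' : List A} : w' ∈ canUpperClosure C w ↔ CanPre C w w' := by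
  simp only [canUpperClosure, Set.mem_sInter, Set.mem_ofPred_eq, and_imp]
  rfl

theorem canUpperClosure_mem (hfin : C.Finite) (hlat : IsLatticeClass C) (w : List A) :
    canUpperClosure C w ∈ C :=
  hlat.sInter_mem (hfin.subset fun _ hK => hK.1) fun _ hK => hK.1

theorem finite_range_canUpperClosure (hfin : C.Finite) : (Set.range (canUpperClosure C)).Finite := by
  refine (hfin.finite_subsets.image Set.sInter).subset ?_
  rintro _ ⟨w, rfl⟩
  exact ⟨_, fun _ hK => hK.1, rfl⟩

theorem mem_of_canPre_upperSet (hfin : C.Finite) (hlat : IsLatticeClass C) {P : Set (List A)}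
    (hP : ∀ x y, x ∈ P → CanPre C x y → y ∈ P) : P ∈ C := by
  have hP_eq : P = ⋃₀ (canUpperClosure C '' P) := by
    ext y
    refine ⟨fun hy => ⟨_, ⟨y, hy, rfl⟩, mem_canUpperClosure_iff.2 fun _ _ h => h⟩, ?_⟩
    rintro ⟨_, ⟨x, hx, rfl⟩, hxy⟩
    exact hP x y hx (mem_canUpperClosure_iff.1 hxy)
  rw [hP_eq]
  exact hlat.sUnion_mem ((finite_range_canUpperClosure hfin).subset (Set.image_subset_range _ _))
    (by rintro _ ⟨x, _, rfl⟩; exact canUpperClosure_mem hfin hlat x)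

theorem isQuotienting_of_canPre_append (hfin : C.Finite) (hlat : IsLatticeClass C)
    (hcomp : ∀ u u' v v' : List A, CanPre C u u' → CanPre C v v' → CanPre C (u ++ v) (u' ++ v')) :
    IsQuotienting C := by
  intro L hL w
  have hrefl : CanPre C w w := fun _ _ h => h
  exact ⟨mem_of_canPre_upperSet hfin hlat fun x y hx hxy => hcomp w w x y hrefl hxy L hL hx,
    mem_of_canPre_upperSet hfin hlat fun x y hx hxy => hcomp x y w w hxy hrefl L hL hx⟩

end CanonicalPreorder

theorem stmt2_general {A : Type*} (C : Set (Set (List A)))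
    (hfin : C.Finite) (hlat : IsLatticeClass C) :
    IsQuotienting C ↔
      ∀ u u' v v' : List A, CanPre C u u' → CanPre C v v' → CanPre C (u ++ v) (u' ++ v') :=
  ⟨fun hq _ _ _ _ hu hv => hq.canPre_append hu hv, isQuotienting_of_canPre_append hfin hlat⟩

/-- A finite lattice `C` is quotienting iff its canonical preorder is compatible with
concatenation. -/
theorem stmt2 {A : Type*} [Fintype A] (C : Set (Set (List A)))
    (hfin : C.Finite) (hlat : IsLatticeClass C) :
    IsQuotienting C ↔
      ∀ u u' v v' : List A, CanPre C u u' → CanPre C v v' → CanPre C (u ++ v) (u' ++ v') :=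
  stmt2_general C hfin hlat
end

section
/- Let C be a finite quotienting lattice of languages, let ≤_C be its canonical preorder, and let ≤_k denote the canonical preorder of the stratum Pol_k(C). Then for any words w, w' ∈ A* and any k ∈ ℕ: w ≤_k w' if and only if (1) w ≤_C w', and (2) if k ≥ 1, for every decomposition w = u a v with a ∈ A there exist u', v' with w' = u' a v', u ≤_{k-1} u', and v ≤_{k-1} v'. -/
/-- One stratum-building step: the least lattice containing `D` and all marked
concatenations of languages of `D`. -/
inductive PolStep {A : Type*} (D : Set (List A) → Prop) : Set (List A) → Prop
  | base {L : Set (List A)} : D L → PolStep D L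
  | mconcat {K L : Set (List A)} (a : A) : D K → D L →
      PolStep D {w | ∃ u ∈ K, ∃ v ∈ L, w = u ++ a :: v}
  | union {K L : Set (List A)} : PolStep D K → PolStep D L → PolStep D (K ∪ L)
  | inter {K L : Set (List A)} : PolStep D K → PolStep D L → PolStep D (K ∩ L)
  | empty : PolStep D ∅
  | univ : PolStep D Set.univ

/-- The strata `Pol_k(C)`: `Pol_0(C) = C`, `Pol_{k+1}(C) = PolStep (Pol_k(C))`. -/
def Polk {A : Type*} (C : Set (Set (List A))) : ℕ → Set (List A) → Prop
  | 0 => fun L => L ∈ C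
  | k + 1 => PolStep (Polk C k)

/-- Canonical preorder `≤_k` of the stratum `Pol_k(C)`. -/
def leK {A : Type*} (C : Set (Set (List A))) (k : ℕ) (w w' : List A) : Prop :=
  ∀ L : Set (List A), Polk C k L → w ∈ L → w' ∈ L

section Aux
variable {A : Type*}

lemma polstep_mono {D D' : Set (List A) → Prop} (h : ∀ L, D L → D' L) :
    ∀ L, PolStep D L → PolStep D' L := by
  intro L hL
  induction hL with
  | base hd => exact PolStep.base (h _ hd)
  | mconcat a hK hL => exact PolStep.mconcat a (h _ hK) (h _ hL)
  | union _ _ ih1 ih2 => exact PolStep.union ih1 ih2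
  | inter _ _ ih1 ih2 => exact PolStep.inter ih1 ih2
  | empty => exact PolStep.empty
  | univ => exact PolStep.univ

lemma polk_succ (C : Set (Set (List A))) (k : ℕ) :
    ∀ L, Polk C k L → Polk C (k + 1) L := by
  induction k with
  | zero => exact fun L h => PolStep.base h
  | succ k ih => exact polstep_mono ih

lemma polk_le (C : Set (Set (List A))) {j k : ℕ} (h : j ≤ k) :
    ∀ L, Polk C j L → Polk C k L := by
  induction h with
  | refl => exact fun L h => h
  | step _ ih => exact fun L hL => polk_succ C _ L (ih L hL)

lemma polk_base (C : Set (Set (List A))) (k : ℕ) {L : Set (List A)} (h : L ∈ C) :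
    Polk C k L := polk_le C (Nat.zero_le k) L h

lemma leK_mono (C : Set (Set (List A))) {j k : ℕ} (h : j ≤ k) {w w' : List A}
    (hle : leK C k w w') : leK C j w w' :=
  fun L hL hw => hle L (polk_le C h L hL) hw

lemma polk_univ (C : Set (Set (List A))) (hlat : IsLatticeClass C) (k : ℕ) :
    Polk C k (Set.univ : Set (List A)) := by
  cases k with
  | zero => exact hlat.2.1
  | succ k => exact PolStep.univ

lemma polk_inter (C : Set (Set (List A))) (hlat : IsLatticeClass C) (k : ℕ)
    {K L : Set (List A)} (hK : Polk C k K) (hL : Polk C k L) : Polk C k (K ∩ L) := by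
  cases k with
  | zero => exact hlat.2.2.2 K L hK hL
  | succ k => exact PolStep.inter hK hL

lemma polk_sInter (C : Set (Set (List A))) (hlat : IsLatticeClass C) (k : ℕ)
    {S : Set (Set (List A))} (hS : S.Finite) (h : ∀ L ∈ S, Polk C k L) :
    Polk C k (⋂₀ S) := by
  have key : ∀ s : Finset (Set (List A)), (∀ L ∈ s, Polk C k L) →
      Polk C k (⋂₀ (s : Set (Set (List A)))) := by
    classical
    intro s
    induction s using Finset.induction_on with
    | empty => intro _; simpa using polk_univ C hlat k
    | @insert a s ha ih =>
      intro h'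
      rw [Finset.coe_insert, Set.sInter_insert]
      exact polk_inter C hlat k (h' a (Finset.mem_insert_self a s))
        (ih fun L hL => h' L (Finset.mem_insert_of_mem hL))
  have := key hS.toFinset (fun L hL => h L (hS.mem_toFinset.mp hL))
  rwa [hS.coe_toFinset] at this

/-- Generators for one `PolStep`. -/
def PolGen (D : Set (List A) → Prop) : Set (Set (List A)) :=
  {L | D L} ∪ (fun p : Set (List A) × Set (List A) × A =>
      {w | ∃ u ∈ p.1, ∃ v ∈ p.2.1, w = u ++ p.2.2 :: v}) ''
    ({L | D L} ×ˢ {L | D L} ×ˢ (Set.univ : Set A))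

lemma polGen_finite [Finite A] {D : Set (List A) → Prop} (hD : {L | D L}.Finite) :
    (PolGen D).Finite :=
  hD.union (((hD.prod (hD.prod Set.finite_univ)).image _))

lemma polstep_repr {D : Set (List A) → Prop} {L : Set (List A)} (h : PolStep D L) :
    ∃ 𝒯 : Set (Set (Set (List A))), (∀ T ∈ 𝒯, T ⊆ PolGen D) ∧
      L = ⋃₀ (Set.sInter '' 𝒯) := by
  induction h with
  | @base L hd =>
    refine ⟨{{L}}, ?_, by simp⟩
    intro T hT
    simp only [Set.mem_singleton_iff] at hT
    subst hT
    intro X hX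
    simp only [Set.mem_singleton_iff] at hX
    subst hX
    exact Or.inl hd
  | @mconcat K M a hK hM =>
    refine ⟨{{{w | ∃ u ∈ K, ∃ v ∈ M, w = u ++ a :: v}}}, ?_, by simp⟩
    intro T hT
    simp only [Set.mem_singleton_iff] at hT
    subst hT
    intro X hX
    simp only [Set.mem_singleton_iff] at hX
    subst hX
    exact Or.inr ⟨(K, M, a), ⟨hK, hM, trivial⟩, rfl⟩
  | union _ _ ih1 ih2 =>
    obtain ⟨T1, hT1, rfl⟩ := ih1
    obtain ⟨T2, hT2, rfl⟩ := ih2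
    refine ⟨T1 ∪ T2, ?_, ?_⟩
    · rintro T (hT | hT)
      exacts [hT1 T hT, hT2 T hT]
    · rw [Set.image_union, Set.sUnion_union]
  | inter _ _ ih1 ih2 =>
    obtain ⟨T1, hT1, rfl⟩ := ih1
    obtain ⟨T2, hT2, rfl⟩ := ih2
    refine ⟨Set.image2 (· ∪ ·) T1 T2, ?_, ?_⟩
    · rintro T hT
      obtain ⟨S1, h1, S2, h2, rfl⟩ := hT
      exact Set.union_subset (hT1 S1 h1) (hT2 S2 h2)
    · ext x
      simp only [Set.mem_sUnion, Set.mem_image, Set.mem_image2, Set.mem_inter_iff]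
      constructor
      · rintro ⟨⟨_, ⟨S1, h1, rfl⟩, hx1⟩, ⟨_, ⟨S2, h2, rfl⟩, hx2⟩⟩
        exact ⟨_, ⟨_, ⟨S1, h1, S2, h2, rfl⟩, rfl⟩, by
          rw [Set.sInter_union]; exact ⟨hx1, hx2⟩⟩
      · rintro ⟨_, ⟨_, ⟨S1, h1, S2, h2, rfl⟩, rfl⟩, hx⟩
        rw [Set.sInter_union] at hx
        exact ⟨⟨_, ⟨S1, h1, rfl⟩, hx.1⟩, ⟨_, ⟨S2, h2, rfl⟩, hx.2⟩⟩
  | empty => exact ⟨∅, by simp, by simp⟩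
  | univ => exact ⟨{∅}, by simp, by simp⟩

lemma polstep_finite [Finite A] {D : Set (List A) → Prop} (hD : {L | D L}.Finite) :
    {L | PolStep D L}.Finite := by
  have hG : {T : Set (Set (List A)) | T ⊆ PolGen D}.Finite :=
    (polGen_finite hD).finite_subsets
  have h2 : {𝒯 : Set (Set (Set (List A))) |
      𝒯 ⊆ {T | T ⊆ PolGen D}}.Finite := hG.finite_subsets
  refine Set.Finite.subset (h2.image (fun 𝒯 => ⋃₀ (Set.sInter '' 𝒯))) ?_
  rintro L hL
  obtain ⟨𝒯, h𝒯, rfl⟩ := polstep_repr hL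
  exact ⟨𝒯, h𝒯, rfl⟩

lemma polk_finite [Finite A] {C : Set (Set (List A))} (hfin : C.Finite) (k : ℕ) :
    {L | Polk C k L}.Finite := by
  induction k with
  | zero => exact hfin
  | succ k ih => exact polstep_finite ih

lemma polk_up [Finite A] (C : Set (Set (List A))) (hfin : C.Finite)
    (hlat : IsLatticeClass C) (k : ℕ) (u : List A) :
    Polk C k {x | leK C k u x} := by
  have heq : {x | leK C k u x} = ⋂₀ {L | Polk C k L ∧ u ∈ L} := by
    ext x
    simp only [Set.mem_sInter, Set.mem_setOf_eq, leK]
    constructor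
    · intro h L hL
      exact h L hL.1 hL.2
    · intro h L hL hu
      exact h L ⟨hL, hu⟩
  rw [heq]
  exact polk_sInter C hlat k
    ((polk_finite hfin k).subset (fun L hL => hL.1)) (fun L hL => hL.1)

end Aux

/-- Inductive characterization of the preorders `≤_k` (Lemma `hintro:preoinduc`). -/
theorem stmt6 {A : Type*} [Fintype A] (C : Set (Set (List A)))
    (hfin : C.Finite) (hlat : IsLatticeClass C) (hq : IsQuotienting C)
    (k : ℕ) (w w' : List A) :
    leK C k w w' ↔
      (CanPre C w w' ∧
        (1 ≤ k → ∀ (u : List A) (a : A) (v : List A), w = u ++ a :: v →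
          ∃ u' v' : List A, w' = u' ++ a :: v' ∧ leK C (k - 1) u u' ∧ leK C (k - 1) v v')) := by
  induction k generalizing w w' with
  | zero =>
    constructor
    · intro h
      exact ⟨fun L hL => h L hL, fun h1 => absurd h1 (by norm_num)⟩
    · exact fun h L hL => h.1 L hL
  | succ k ih =>
    constructor
    · intro h
      refine ⟨fun L hL hw => h L (polk_base C (k + 1) hL) hw, fun _ u a v hw => ?_⟩
      have hUu : Polk C k {x | leK C k u x} := polk_up C hfin hlat k u
      have hUv : Polk C k {x | leK C k v x} := polk_up C hfin hlat k v
      have hK : Polk C (k + 1)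
          {x | ∃ u' ∈ {x | leK C k u x}, ∃ v' ∈ {x | leK C k v x}, x = u' ++ a :: v'} :=
        PolStep.mconcat a hUu hUv
      have hwK : w ∈
          {x | ∃ u' ∈ {x | leK C k u x}, ∃ v' ∈ {x | leK C k v x}, x = u' ++ a :: v'} :=
        ⟨u, fun L _ hu => hu, v, fun L _ hv => hv, hw⟩
      obtain ⟨u', hu', v', hv', hw'⟩ := h _ hK hwK
      exact ⟨u', v', hw', hu', hv'⟩
    · rintro ⟨hcan, hdec⟩ L hL hw
      have hdec' := hdec (by omega)
      revert hw
      induction hL with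
      | @base L hD =>
        intro hw
        refine (ih w w').mpr ⟨hcan, fun _ u a v hweq => ?_⟩ L hD hw
        obtain ⟨u', v', hw', h1, h2⟩ := hdec' u a v hweq
        exact ⟨u', v', hw', leK_mono C (Nat.sub_le k 1) h1, leK_mono C (Nat.sub_le k 1) h2⟩
      | @mconcat K M a hK hM =>
        rintro ⟨u, hu, v, hv, rfl⟩
        obtain ⟨u', v', hw', h1, h2⟩ := hdec' u a v rfl
        exact ⟨u', h1 K hK hu, v', h2 M hM hv, hw'⟩
      | union _ _ ih1 ih2 =>
        rintro (hw | hw)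
        exacts [Or.inl (ih1 hw), Or.inr (ih2 hw)]
      | inter _ _ ih1 ih2 =>
        rintro ⟨hw1, hw2⟩
        exact ⟨ih1 hw1, ih2 hw2⟩
      | empty => rintro ⟨⟩
      | univ => exact fun _ => trivial
end

section
/- Let C be a finite quotienting lattice with period p (a natural number p ≥ 1 such that u^{pm} ≤_C u^{pm'} for all words u and all m, m' ≥ 1). Then for any k ∈ ℕ, any word u, and any m, m' ≥ 2^{k+1} − 1, we have u^{pm} ≤_k u^{pm'}, where ≤_k is the canonical preorder of the stratum Pol_k(C). -/
/-- `u^n`: the `n`-th power of a word. -/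
def wpow {A : Type*} (u : List A) : ℕ → List A
  | 0 => []
  | n + 1 => u ++ wpow u n

theorem wpow_add {A : Type*} (u : List A) (a b : ℕ) :
    wpow u (a + b) = wpow u a ++ wpow u b := by
  induction a with
  | zero => simp [wpow]
  | succ n ih =>
    rw [Nat.succ_add]
    show u ++ wpow u (n + b) = (u ++ wpow u n) ++ wpow u b
    rw [ih, List.append_assoc]

theorem wpow_one_add {A : Type*} (u : List A) (e : ℕ) :
    wpow u (1 + e) = u ++ wpow u e := by
  rw [Nat.add_comm]; rfl

theorem wpow_split {A : Type*} {u : List A} {a : A} :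
    ∀ n {c d : List A}, c ++ a :: d = wpow u n →
    ∃ j e r s, n = j + e + 1 ∧ u = r ++ a :: s ∧ c = wpow u j ++ r ∧ d = s ++ wpow u e := by
  intro n
  induction n with
  | zero => intro c d h; exact absurd h (by simp [wpow])
  | succ n ih =>
    intro c d h
    replace h : c ++ a :: d = u ++ wpow u n := h
    rcases List.append_eq_append_iff.mp h with ⟨w, hw1, hw2⟩ | ⟨w, hw1, hw2⟩
    · -- hw1 : u = c ++ w, hw2 : a :: d = w ++ wpow u n
      match w, hw1, hw2 with
      | [], hw1, hw2 =>
        have hz : ([] : List A) ++ a :: d = wpow u n := by simpa using hw2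
        obtain ⟨j, e, r, s, h1, h2, h3, h4⟩ := ih hz
        obtain ⟨hj0, hr0⟩ := List.append_eq_nil_iff.mp h3.symm
        refine ⟨j + 1, e, [], s, by omega, by simpa [hr0] using h2, ?_, h4⟩
        show c = (u ++ wpow u j) ++ []
        simp [hj0]
        simpa using hw1.symm
      | b :: w', hw1, hw2 =>
        injection hw2 with hb hd
        subst hb
        exact ⟨0, n, c, w', by omega, by simpa using hw1, by simp [wpow], hd⟩
    · -- hw1 : c = u ++ w, hw2 : wpow u n = w ++ a :: d
      obtain ⟨j, e, r, s, h1, h2, h3, h4⟩ := ih hw2.symm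
      refine ⟨j + 1, e, r, s, by omega, h2, ?_, h4⟩
      show c = (u ++ wpow u j) ++ r
      rw [hw1, h3, List.append_assoc]

theorem three_split {A : Type*} {x w y c d : List A} {a : A}
    (h : x ++ w ++ y = c ++ a :: d) :
    (∃ t, x = c ++ a :: t ∧ d = t ++ w ++ y) ∨
    (∃ c1 d1, c = x ++ c1 ∧ d = d1 ++ y ∧ c1 ++ a :: d1 = w) ∨
    (∃ t, y = t ++ a :: d ∧ c = x ++ w ++ t) := by
  have h' : x ++ (w ++ y) = c ++ a :: d := by simpa [List.append_assoc] using h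
  rcases List.append_eq_append_iff.mp h' with ⟨e, he1, he2⟩ | ⟨e, he1, he2⟩
  · -- he1 : c = x ++ e, he2 : w ++ y = e ++ a :: d
    rcases List.append_eq_append_iff.mp he2.symm with ⟨f, hf1, hf2⟩ | ⟨f, hf1, hf2⟩
    · -- hf1 : w = e ++ f, hf2 : a :: d = f ++ y
      match f, hf1, hf2 with
      | [], hf1, hf2 =>
        right; right
        refine ⟨[], by simpa using hf2.symm, ?_⟩
        rw [he1]; simp [hf1]
      | b :: f', hf1, hf2 =>
        injection hf2 with hb hd
        subst hb
        exact Or.inr (Or.inl ⟨e, f', he1, hd, hf1.symm⟩)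
    · -- hf1 : e = w ++ f, hf2 : y = f ++ a :: d
      right; right
      refine ⟨f, hf2, ?_⟩
      rw [he1, hf1, List.append_assoc]
  · -- he1 : x = c ++ e, he2 : a :: d = e ++ (w ++ y)
    match e, he1, he2 with
    | [], he1, he2 =>
      have hx : x = c := by simpa using he1
      have he2' : a :: d = w ++ y := by simpa using he2
      match w, he2' with
      | [], he2' =>
        right; right
        exact ⟨[], by simpa using he2'.symm, by simp [hx]⟩
      | b :: w', he2' =>
        injection he2' with hb hd
        subst hb
        exact Or.inr (Or.inl ⟨[], w', by simp [hx], hd, rfl⟩)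
    | b :: e', he1, he2 =>
      injection he2 with hb hd
      subst hb
      exact Or.inl ⟨e', he1, by simpa [List.append_assoc] using hd⟩

theorem key {A : Type*} {C : Set (Set (List A))} (hq : IsQuotienting C)
    {p : ℕ} (hp : 1 ≤ p)
    (hper : ∀ (u : List A) (m m' : ℕ), 1 ≤ m → 1 ≤ m' →
      CanPre C (wpow u (p * m)) (wpow u (p * m'))) :
    ∀ (k : ℕ) (u : List A) (m m' : ℕ), 2 ^ (k + 1) ≤ m + 1 → 2 ^ (k + 1) ≤ m' + 1 →
    ∀ L, Polk C k L → ∀ x y : List A,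
      x ++ wpow u (p * m) ++ y ∈ L → x ++ wpow u (p * m') ++ y ∈ L := by
  intro k
  induction k with
  | zero =>
    intro u m m' hm hm' L hL x y hmem
    norm_num at hm hm'
    have h1 : {v : List A | v ++ y ∈ L} ∈ C := (hq L hL y).2
    have h2 : {v : List A | x ++ v ∈ {v : List A | v ++ y ∈ L}} ∈ C := (hq _ h1 x).1
    have h3 : wpow u (p * m) ∈ {v : List A | x ++ v ∈ {v : List A | v ++ y ∈ L}} := by
      simp only [Set.mem_setOf_eq]
      simpa [List.append_assoc] using hmem
    have h4 := hper u m m' (by omega) (by omega) _ h2 h3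
    simpa [List.append_assoc] using h4
  | succ k ih =>
    intro u m m' hm hm'
    have hpow : (1 : ℕ) ≤ 2 ^ (k + 1) := Nat.one_le_two_pow
    have h2p : 2 ^ (k + 1 + 1) = 2 * 2 ^ (k + 1) := by ring
    rw [h2p] at hm hm'
    -- one-step increase
    have up : ∀ n, 2 * 2 ^ (k + 1) ≤ n + 1 → ∀ L, Polk C (k + 1) L → ∀ x y : List A,
        x ++ wpow u (p * n) ++ y ∈ L → x ++ wpow u (p * (n + 1)) ++ y ∈ L := by
      intro n hn L hL
      induction hL with
      | @base L' hD =>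
        intro x y hmem
        exact ih u n (n + 1) (by omega) (by omega) _ hD x y hmem
      | @mconcat K' L' a hK' hL' =>
        intro x y hmem
        obtain ⟨c, hc, d, hd, heq⟩ := hmem
        rcases three_split heq with ⟨t, hx, hdq⟩ | ⟨c1, d1, hcq, hdq, hw⟩ | ⟨t, hy, hcq⟩
        · have hd2 : t ++ wpow u (p * n) ++ y ∈ L' := by rw [← hdq]; exact hd
          have hd' := ih u n (n + 1) (by omega) (by omega) _ hL' t y hd2
          refine ⟨c, hc, t ++ wpow u (p * (n + 1)) ++ y, hd', ?_⟩
          rw [hx]; simp [List.append_assoc]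
        · obtain ⟨j, e, r, s, hne, hu, hc1, hd1⟩ := wpow_split _ hw
          have hmn : p * (2 * (2 ^ (k + 1) - 1) + 1) ≤ p * n :=
            Nat.mul_le_mul_left p (by omega)
          have hexpand : p * (2 * (2 ^ (k + 1) - 1) + 1) = 2 * (p * (2 ^ (k + 1) - 1)) + p := by
            ring
          have hkey : p * (2 ^ (k + 1) - 1) ≤ j ∨ p * (2 ^ (k + 1) - 1) ≤ e := by omega
          rcases hkey with hj | he
          · -- big left part
            obtain ⟨q, t, hjd, hqN⟩ : ∃ q t, j = p * q + t ∧ 2 ^ (k + 1) - 1 ≤ q :=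
              ⟨j / p, j % p, (Nat.div_add_mod j p).symm,
                (Nat.le_div_iff_mul_le (by omega)).mpr (by rw [Nat.mul_comm]; exact hj)⟩
            subst hjd
            have hc' : c = x ++ wpow u (p * q) ++ (wpow u t ++ r) := by
              rw [hcq, hc1, wpow_add]; simp [List.append_assoc]
            have hcmem : x ++ wpow u (p * q) ++ (wpow u t ++ r) ∈ K' := by
              rw [← hc']; exact hc
            have hK2 := ih u q (q + 1) (by omega) (by omega) _ hK' x (wpow u t ++ r) hcmem
            refine ⟨x ++ wpow u (p * (q + 1)) ++ (wpow u t ++ r), hK2, d, hd, ?_⟩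
            have e1 : p * (n + 1) = p * n + p := by ring
            have e2 : p * (q + 1) = p * q + p := by ring
            have hE : p * (n + 1) = p * (q + 1) + (t + (1 + e)) := by omega
            rw [hdq, hd1, hE, wpow_add, wpow_add, wpow_one_add, hu]
            simp [List.append_assoc]
          · -- big right part
            obtain ⟨q, t, hed, hqN⟩ : ∃ q t, e = t + p * q ∧ 2 ^ (k + 1) - 1 ≤ q := by
              have hdm := Nat.div_add_mod e p
              exact ⟨e / p, e % p, by omega,
                (Nat.le_div_iff_mul_le (by omega)).mpr (by rw [Nat.mul_comm]; exact he)⟩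
            subst hed
            have hd' : d = (s ++ wpow u t) ++ wpow u (p * q) ++ y := by
              rw [hdq, hd1, wpow_add]; simp [List.append_assoc]
            have hdmem : (s ++ wpow u t) ++ wpow u (p * q) ++ y ∈ L' := by
              rw [← hd']; exact hd
            have hL2 := ih u q (q + 1) (by omega) (by omega) _ hL' (s ++ wpow u t) y hdmem
            refine ⟨c, hc, (s ++ wpow u t) ++ wpow u (p * (q + 1)) ++ y, hL2, ?_⟩
            have e1 : p * (n + 1) = p * n + p := by ring
            have e2 : p * (q + 1) = p * q + p := by ring
            have hE : p * (n + 1) = j + (1 + (t + p * (q + 1))) := by omega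
            rw [hcq, hc1, hE, wpow_add, wpow_one_add, wpow_add, hu]
            simp [List.append_assoc]
        · have hc2 : x ++ wpow u (p * n) ++ t ∈ K' := by rw [← hcq]; exact hc
          have hc' := ih u n (n + 1) (by omega) (by omega) _ hK' x t hc2
          refine ⟨x ++ wpow u (p * (n + 1)) ++ t, hc', d, hd, ?_⟩
          rw [hy]; simp [List.append_assoc]
      | @union K' L' hK' hL' ihK ihL =>
        intro x y hmem
        rcases hmem with h | h
        · exact Or.inl (ihK x y h)
        · exact Or.inr (ihL x y h)
      | @inter K' L' hK' hL' ihK ihL =>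
        intro x y hmem
        exact ⟨ihK x y hmem.1, ihL x y hmem.2⟩
      | empty => intro x y hmem; exact absurd hmem (Set.notMem_empty _)
      | univ => intro x y _; trivial
    -- one-step decrease
    have down : ∀ n, 2 * 2 ^ (k + 1) ≤ n + 1 → ∀ L, Polk C (k + 1) L → ∀ x y : List A,
        x ++ wpow u (p * (n + 1)) ++ y ∈ L → x ++ wpow u (p * n) ++ y ∈ L := by
      intro n hn L hL
      induction hL with
      | @base L' hD =>
        intro x y hmem
        exact ih u (n + 1) n (by omega) (by omega) _ hD x y hmem
      | @mconcat K' L' a hK' hL' =>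
        intro x y hmem
        obtain ⟨c, hc, d, hd, heq⟩ := hmem
        rcases three_split heq with ⟨t, hx, hdq⟩ | ⟨c1, d1, hcq, hdq, hw⟩ | ⟨t, hy, hcq⟩
        · have hd2 : t ++ wpow u (p * (n + 1)) ++ y ∈ L' := by rw [← hdq]; exact hd
          have hd' := ih u (n + 1) n (by omega) (by omega) _ hL' t y hd2
          refine ⟨c, hc, t ++ wpow u (p * n) ++ y, hd', ?_⟩
          rw [hx]; simp [List.append_assoc]
        · obtain ⟨j, e, r, s, hne, hu, hc1, hd1⟩ := wpow_split _ hw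
          have hmn : p * (2 * 2 ^ (k + 1)) ≤ p * (n + 1) :=
            Nat.mul_le_mul_left p (by omega)
          have hexpand : p * (2 * 2 ^ (k + 1)) = 2 * (p * 2 ^ (k + 1)) := by ring
          have hkey : p * 2 ^ (k + 1) ≤ j ∨ p * 2 ^ (k + 1) ≤ e := by omega
          rcases hkey with hj | he
          · obtain ⟨q, t, hjd, hqN⟩ : ∃ q t, j = p * (q + 1) + t ∧ 2 ^ (k + 1) - 1 ≤ q := by
              have hdm := Nat.div_add_mod j p
              have hq0 : 2 ^ (k + 1) ≤ j / p :=
                (Nat.le_div_iff_mul_le (by omega)).mpr (by rw [Nat.mul_comm]; exact hj)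
              have h5 : j / p = (j / p - 1) + 1 := by omega
              refine ⟨j / p - 1, j % p, ?_, by omega⟩
              rw [← h5]; omega
            subst hjd
            have hc' : c = x ++ wpow u (p * (q + 1)) ++ (wpow u t ++ r) := by
              rw [hcq, hc1, wpow_add]; simp [List.append_assoc]
            have hcmem : x ++ wpow u (p * (q + 1)) ++ (wpow u t ++ r) ∈ K' := by
              rw [← hc']; exact hc
            have hK2 := ih u (q + 1) q (by omega) (by omega) _ hK' x (wpow u t ++ r) hcmem
            refine ⟨x ++ wpow u (p * q) ++ (wpow u t ++ r), hK2, d, hd, ?_⟩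
            have e1 : p * (n + 1) = p * n + p := by ring
            have e2 : p * (q + 1) = p * q + p := by ring
            have hE : p * n = p * q + (t + (1 + e)) := by omega
            rw [hdq, hd1, hE, wpow_add, wpow_add, wpow_one_add, hu]
            simp [List.append_assoc]
          · obtain ⟨q, t, hed, hqN⟩ : ∃ q t, e = t + p * (q + 1) ∧ 2 ^ (k + 1) - 1 ≤ q := by
              have hdm := Nat.div_add_mod e p
              have hq0 : 2 ^ (k + 1) ≤ e / p :=
                (Nat.le_div_iff_mul_le (by omega)).mpr (by rw [Nat.mul_comm]; exact he)
              have h5 : e / p = (e / p - 1) + 1 := by omega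
              refine ⟨e / p - 1, e % p, ?_, by omega⟩
              rw [← h5]; omega
            subst hed
            have hd' : d = (s ++ wpow u t) ++ wpow u (p * (q + 1)) ++ y := by
              rw [hdq, hd1, wpow_add]; simp [List.append_assoc]
            have hdmem : (s ++ wpow u t) ++ wpow u (p * (q + 1)) ++ y ∈ L' := by
              rw [← hd']; exact hd
            have hL2 := ih u (q + 1) q (by omega) (by omega) _ hL' (s ++ wpow u t) y hdmem
            refine ⟨c, hc, (s ++ wpow u t) ++ wpow u (p * q) ++ y, hL2, ?_⟩
            have e1 : p * (n + 1) = p * n + p := by ring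
            have e2 : p * (q + 1) = p * q + p := by ring
            have hE : p * n = j + (1 + (t + p * q)) := by omega
            rw [hcq, hc1, hE, wpow_add, wpow_one_add, wpow_add, hu]
            simp [List.append_assoc]
        · have hc2 : x ++ wpow u (p * (n + 1)) ++ t ∈ K' := by rw [← hcq]; exact hc
          have hc' := ih u (n + 1) n (by omega) (by omega) _ hK' x t hc2
          refine ⟨x ++ wpow u (p * n) ++ t, hc', d, hd, ?_⟩
          rw [hy]; simp [List.append_assoc]
      | @union K' L' hK' hL' ihK ihL =>
        intro x y hmem
        rcases hmem with h | h
        · exact Or.inl (ihK x y h)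
        · exact Or.inr (ihL x y h)
      | @inter K' L' hK' hL' ihK ihL =>
        intro x y hmem
        exact ⟨ihK x y hmem.1, ihL x y hmem.2⟩
      | empty => intro x y hmem; exact absurd hmem (Set.notMem_empty _)
      | univ => intro x y _; trivial
    -- chaining
    have upd : ∀ n d, 2 * 2 ^ (k + 1) ≤ n + 1 → ∀ L, Polk C (k + 1) L → ∀ x y : List A,
        x ++ wpow u (p * n) ++ y ∈ L → x ++ wpow u (p * (n + d)) ++ y ∈ L := by
      intro n d
      induction d with
      | zero => intro _ L hL x y h; exact h
      | succ d ihd =>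
        intro hn L hL x y h
        exact up (n + d) (by omega) L hL x y (ihd hn L hL x y h)
    have downd : ∀ n d, 2 * 2 ^ (k + 1) ≤ n + 1 → ∀ L, Polk C (k + 1) L → ∀ x y : List A,
        x ++ wpow u (p * (n + d)) ++ y ∈ L → x ++ wpow u (p * n) ++ y ∈ L := by
      intro n d
      induction d with
      | zero => intro _ L hL x y h; exact h
      | succ d ihd =>
        intro hn L hL x y h
        exact ihd hn L hL x y (down (n + d) (by omega) L hL x y h)
    intro L hL x y hmem
    rcases Nat.le_total m m' with h | h
    · have hmm : m' = m + (m' - m) := by omega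
      rw [hmm]
      exact upd m (m' - m) (by omega) L hL x y hmem
    · have hmm : m = m' + (m - m') := by omega
      refine downd m' (m - m') (by omega) L hL x y ?_
      rw [← hmm]
      exact hmem

/-- If `p` is a period of the finite quotienting lattice `C`, then
`u^{pm} ≤_k u^{pm'}` as soon as `m, m' ≥ 2^{k+1} - 1`. -/
theorem stmt7 {A : Type*} [Fintype A] (C : Set (Set (List A)))
    (hfin : C.Finite) (hlat : IsLatticeClass C) (hq : IsQuotienting C)
    (p : ℕ) (hp : 1 ≤ p)
    (hper : ∀ (u : List A) (m m' : ℕ), 1 ≤ m → 1 ≤ m' →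
      CanPre C (wpow u (p * m)) (wpow u (p * m')))
    (k : ℕ) (u : List A) (m m' : ℕ)
    (hm : 2 ^ (k + 1) - 1 ≤ m) (hm' : 2 ^ (k + 1) - 1 ≤ m') :
    leK C k (wpow u (p * m)) (wpow u (p * m')) := by
  intro L hL hmem
  have hpow : (1 : ℕ) ≤ 2 ^ (k + 1) := Nat.one_le_two_pow
  have h := key hq hp hper k u m m' (by omega) (by omega) L hL [] [] (by simpa using hmem)
  simpa using h
end

section
/- Let α : A* → M be a morphism into a finite monoid, and let w be a word admitting an α-factorization forest of height at most h and idempotent height at most m. Then every prefix (and every suffix) of w admits an α-factorization forest of height at most h + 1 and idempotent height at most m. -/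
/-- `FF α w h m`: the word `w` admits an `α`-factorization forest of height at most `h`
and idempotent height at most `m`. Leaves are the empty word or single letters; a binary
node concatenates two subforests; an idempotent node concatenates at least three
subforests whose labels all have the same idempotent image under `α`. -/
inductive FF {A M : Type*} [Monoid M] (α : List A → M) : List A → ℕ → ℕ → Prop
  | empty (h m : ℕ) : FF α [] h m
  | letter (a : A) (h m : ℕ) : FF α [a] h m
  | binary {w₁ w₂ : List A} {h m : ℕ} :
      FF α w₁ h m → FF α w₂ h m → FF α (w₁ ++ w₂) (h + 1) m
  | idem {h m : ℕ} (ws : List (List A)) (e : M) :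
      3 ≤ ws.length → e * e = e →
      (∀ w ∈ ws, FF α w h m) → (∀ w ∈ ws, α w = e) →
      FF α ws.flatten (h + 1) (m + 1)

/-- Monotonicity of `FF` in both height bounds. -/
theorem FF.mono {A M : Type*} [Monoid M] {α : List A → M} {w : List A} {h m h' m' : ℕ}
    (hw : FF α w h m) (hh : h ≤ h') (hm : m ≤ m') : FF α w h' m' := by
  induction hw generalizing h' m' with
  | empty => exact .empty _ _
  | letter a => exact .letter a _ _
  | binary h1 h2 ih1 ih2 =>
    obtain ⟨h'', rfl⟩ := Nat.exists_eq_add_of_le hh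
    have e1 : ∀ k : ℕ, k + 1 + h'' = (k + h'') + 1 := fun k => by omega
    rw [e1]
    exact .binary (ih1 (Nat.le_add_right _ _) hm) (ih2 (Nat.le_add_right _ _) hm)
  | idem ws e hlen he hFF hα ih =>
    obtain ⟨h'', rfl⟩ := Nat.exists_eq_add_of_le hh
    obtain ⟨m'', rfl⟩ := Nat.exists_eq_add_of_le hm
    have e1 : ∀ k : ℕ, k + 1 + h'' = (k + h'') + 1 := fun k => by omega
    have e2 : ∀ k : ℕ, k + 1 + m'' = (k + m'') + 1 := fun k => by omega
    rw [e1, e2]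
    exact .idem ws e hlen he
      (fun w hw => ih w hw (Nat.le_add_right _ _) (Nat.le_add_right _ _)) hα

/-- Splitting a flattened list of words. -/
theorem flatten_split {A : Type*} :
    ∀ (ws : List (List A)) (u v : List A), ws.flatten = u ++ v →
      (u = ws.flatten ∧ v = []) ∨
      ∃ ws₁ p s ws₂, ws = ws₁ ++ (p ++ s) :: ws₂ ∧
        u = ws₁.flatten ++ p ∧ v = s ++ ws₂.flatten := by
  intro ws
  induction ws with
  | nil =>
    intro u v h
    simp only [List.flatten_nil] at h
    rcases List.append_eq_nil_iff.mp h.symm with ⟨rfl, rfl⟩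
    exact Or.inl ⟨rfl, rfl⟩
  | cons x ws ih =>
    intro u v h
    simp only [List.flatten_cons] at h
    rcases List.append_eq_append_iff.mp h with ⟨a, ha1, ha2⟩ | ⟨c, hc1, hc2⟩
    · -- u = x ++ a, a ++ v = ws.flatten
      rcases ih a v ha2 with ⟨rfl, rfl⟩ | ⟨ws₁, p, s, ws₂, h1, h2, h3⟩
      · exact Or.inl ⟨by simp [ha1], rfl⟩
      · refine Or.inr ⟨x :: ws₁, p, s, ws₂, by simp [h1], ?_, h3⟩
        simp [ha1, h2]
    · -- x = u ++ c, v = c ++ ws.flatten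
      exact Or.inr ⟨[], u, c, ws, by simp [hc1], by simp, hc2⟩

section helpers
variable {A M : Type*} [Monoid M] {α : List A → M} {h m : ℕ} {e : M}

/-- Attach a word to the right of a (possibly short) idempotent block. -/
theorem flatten_left (ws : List (List A)) (he : e * e = e)
    (hFF : ∀ w ∈ ws, FF α w h m) (hα : ∀ w ∈ ws, α w = e)
    {p : List A} (hp : FF α p (h + 1) m) :
    FF α (ws.flatten ++ p) (h + 1 + 1) (m + 1) := by
  match ws with
  | [] => simpa using hp.mono (by omega) (by omega)
  | [a] =>
    simp only [List.flatten_cons, List.flatten_nil, List.append_nil]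
    exact FF.binary ((hFF a (by simp)).mono (by omega) (by omega)) (hp.mono le_rfl (by omega))
  | [a, b] =>
    have : ([a, b] : List (List A)).flatten ++ p = (a ++ b) ++ p := by simp
    rw [this]
    exact FF.binary
      (FF.binary ((hFF a (by simp)).mono le_rfl (by omega))
        ((hFF b (by simp)).mono le_rfl (by omega)))
      (hp.mono le_rfl (by omega))
  | a :: b :: c :: ws' =>
    exact FF.binary (FF.idem _ e (by simp only [List.length_cons]; omega) he hFF hα) (hp.mono le_rfl (by omega))

/-- Attach a word to the left of a (possibly short) idempotent block. -/
theorem flatten_right (ws : List (List A)) (he : e * e = e)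
    (hFF : ∀ w ∈ ws, FF α w h m) (hα : ∀ w ∈ ws, α w = e)
    {s : List A} (hs : FF α s (h + 1) m) :
    FF α (s ++ ws.flatten) (h + 1 + 1) (m + 1) := by
  match ws with
  | [] => simpa using hs.mono (by omega) (by omega)
  | [a] =>
    simp only [List.flatten_cons, List.flatten_nil, List.append_nil]
    exact FF.binary (hs.mono le_rfl (by omega)) ((hFF a (by simp)).mono (by omega) (by omega))
  | [a, b] =>
    have : s ++ ([a, b] : List (List A)).flatten = s ++ (a ++ b) := by simp
    rw [this]
    exact FF.binary (hs.mono le_rfl (by omega))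
      (FF.binary ((hFF a (by simp)).mono le_rfl (by omega))
        ((hFF b (by simp)).mono le_rfl (by omega)))
  | a :: b :: c :: ws' =>
    exact FF.binary (hs.mono le_rfl (by omega)) (FF.idem _ e (by simp only [List.length_cons]; omega) he hFF hα)

end helpers

/-- Every prefix and every suffix of a word admitting an `α`-factorization forest of
height at most `h` and idempotent height at most `m` admits one of height at most `h + 1`
and idempotent height at most `m`. -/
theorem stmt9 {A M : Type*} [Monoid M] [Finite M] (α : List A → M)
    (hone : α [] = 1) (hmul : ∀ u v : List A, α (u ++ v) = α u * α v)
    (w : List A) (h m : ℕ) (hw : FF α w h m)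
    (u v : List A) (hsplit : w = u ++ v) :
    FF α u (h + 1) m ∧ FF α v (h + 1) m := by
  induction hw generalizing u v with
  | empty h m =>
    rcases List.append_eq_nil_iff.mp hsplit.symm with ⟨rfl, rfl⟩
    exact ⟨.empty _ _, .empty _ _⟩
  | letter a h m =>
    rcases u with _ | ⟨x, u⟩
    · simp only [List.nil_append] at hsplit
      exact ⟨.empty _ _, hsplit ▸ .letter a _ _⟩
    · simp only [List.cons_append, List.cons.injEq] at hsplit
      rcases List.append_eq_nil_iff.mp hsplit.2.symm with ⟨rfl, rfl⟩
      exact ⟨hsplit.1 ▸ .letter a _ _, .empty _ _⟩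
  | binary h1 h2 ih1 ih2 =>
    rename_i w₁ w₂ h m
    rcases List.append_eq_append_iff.mp hsplit with ⟨a, ha1, ha2⟩ | ⟨c, hc1, hc2⟩
    · -- u = w₁ ++ a, w₂ = a ++ v
      obtain ⟨hfa, hfv⟩ := ih2 a v ha2
      exact ⟨ha1.symm ▸ FF.binary (h1.mono (by omega) le_rfl) hfa, hfv.mono (by omega) le_rfl⟩
    · -- w₁ = u ++ c, v = c ++ w₂
      obtain ⟨hfu, hfc⟩ := ih1 u c hc1
      exact ⟨hfu.mono (by omega) le_rfl, hc2.symm ▸ FF.binary hfc (h2.mono (by omega) le_rfl)⟩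
  | idem ws e hlen he hFF hα ih =>
    rename_i h m
    rcases flatten_split ws u v hsplit with ⟨rfl, rfl⟩ | ⟨ws₁, p, s, ws₂, h1, rfl, rfl⟩
    · exact ⟨(FF.idem ws e hlen he hFF hα).mono (by omega) le_rfl, .empty _ _⟩
    · have hmemL : ∀ w ∈ ws₁, w ∈ ws := fun w hw => h1 ▸ (by simp [hw])
      have hmemR : ∀ w ∈ ws₂, w ∈ ws := fun w hw => h1 ▸ (by simp [hw])
      have hps : p ++ s ∈ ws := h1 ▸ (by simp)
      obtain ⟨hfp, hfs⟩ := ih (p ++ s) hps p s rfl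
      constructor
      · exact flatten_left ws₁ he (fun w hw => hFF w (hmemL w hw))
          (fun w hw => hα w (hmemL w hw)) hfp
      · exact flatten_right ws₂ he (fun w hw => hFF w (hmemR w hw))
          (fun w hw => hα w (hmemR w hw)) hfs
end

section
/- Let D be a finite lattice of languages with canonical preorder ≤_D, let ρ : 2^{A*} → R be a multiplicative rating map, and let L ⊆ A* and r ∈ R. Then r ∈ I_D[L, ρ] (the D-optimal ρ-imprint on L) if and only if there exist a word w ∈ L and a language K ⊆ A* such that w ≤_D u for every u ∈ K, and r ≤ ρ(K). -/
/-- The canonical order of an idempotent hemiring: `r ≤ s` iff `s + r = s`. -/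
def hle {R : Type*} [NonUnitalSemiring R] (r s : R) : Prop := s + r = s

/-- Concatenation of languages. -/
def lcat {A : Type*} (K L : Set (List A)) : Set (List A) :=
  {w | ∃ u ∈ K, ∃ v ∈ L, w = u ++ v}

/-- The `ρ`-imprint of a set of languages. -/
def Imprint {A R : Type*} [NonUnitalSemiring R]
    (ρ : Set (List A) → R) (Ks : Set (Set (List A))) : Set R :=
  {r | ∃ K ∈ Ks, hle r (ρ K)}

/-- `Ks` is a `D`-cover of `L`. -/
def IsCoverIn {A : Type*} (D : Set (List A) → Prop) (L : Set (List A))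
    (Ks : Set (Set (List A))) : Prop :=
  Ks.Finite ∧ (∀ K ∈ Ks, D K) ∧ L ⊆ ⋃₀ Ks

/-- The `D`-optimal `ρ`-imprint on `L`. -/
def OptImp {A R : Type*} [NonUnitalSemiring R]
    (D : Set (List A) → Prop) (L : Set (List A)) (ρ : Set (List A) → R) : Set R :=
  {r | ∀ Ks : Set (Set (List A)), IsCoverIn D L Ks → r ∈ Imprint ρ Ks}

/-! The languages `U w = {u : w ≤_D u}`, for `w ∈ L`, are finitely many members of `D` and cover `L`,
so every element of the optimal imprint lies below some `ρ (U w)`. Conversely any cover in `D`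
has a member containing `w`; being an upper set, it contains every `K` above `w`, and an
additive rating is monotone. -/

theorem hle_trans {R : Type*} [NonUnitalSemiring R] {a b c : R}
    (hab : hle a b) (hbc : hle b c) : hle a c :=
  calc c + a = c + b + a := by rw [hbc]
    _ = c + (b + a) := add_assoc _ _ _
    _ = c := by rw [hab, hbc]

theorem hle_of_subset {A R : Type*} [NonUnitalSemiring R] {ρ : Set (List A) → R}
    (hadd : ∀ K L : Set (List A), ρ (K ∪ L) = ρ K + ρ L) {K K' : Set (List A)}
    (hKK' : K ⊆ K') : hle (ρ K) (ρ K') := by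
  rw [hle, ← hadd, Set.union_eq_self_of_subset_right hKK']

theorem IsLatticeClass.sInter_mem_s17 {A : Type*} {D : Set (Set (List A))} (hlat : IsLatticeClass D)
    {S : Set (Set (List A))} (hS : S.Finite) (hSD : S ⊆ D) : ⋂₀ S ∈ D := by
  induction S, hS using Set.Finite.induction_on with
  | empty => simpa using hlat.2.1
  | @insert M S _ _ ih =>
    rw [Set.sInter_insert]
    exact hlat.2.2.2 _ _ (hSD (Set.mem_insert _ _))
      (ih fun _ hx => hSD (Set.mem_insert_of_mem _ hx))

def upperSetOf {A : Type*} (D : Set (Set (List A))) (w : List A) : Set (List A) :=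
  ⋂₀ {M | M ∈ D ∧ w ∈ M}

section UpperSetOf

variable {A : Type*} {D : Set (Set (List A))}

theorem mem_upperSetOf_iff {w u : List A} : u ∈ upperSetOf D w ↔ CanPre D w u := by
  simp only [upperSetOf, Set.mem_sInter, Set.mem_ofPred_eq, CanPre, and_imp]

theorem self_mem_upperSetOf (w : List A) : w ∈ upperSetOf D w :=
  mem_upperSetOf_iff.2 fun _ _ hw => hw

theorem upperSetOf_mem (hfin : D.Finite) (hlat : IsLatticeClass D) (w : List A) :
    upperSetOf D w ∈ D :=
  hlat.sInter_mem_s17 (hfin.subset fun _ hM => hM.1) fun _ hM => hM.1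

theorem isCoverIn_image_upperSetOf (hfin : D.Finite) (hlat : IsLatticeClass D)
    (L : Set (List A)) : IsCoverIn (· ∈ D) L (upperSetOf D '' L) := by
  have hD : ∀ K ∈ upperSetOf D '' L, K ∈ D := by
    rintro _ ⟨w, _, rfl⟩
    exact upperSetOf_mem hfin hlat w
  exact ⟨hfin.subset hD, hD, fun w hw => ⟨_, ⟨w, hw, rfl⟩, self_mem_upperSetOf w⟩⟩

end UpperSetOf

theorem stmt17_general {A R : Type*} [NonUnitalSemiring R]
    (D : Set (Set (List A))) (hfin : D.Finite) (hlat : IsLatticeClass D)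
    (ρ : Set (List A) → R)
    (hadd : ∀ K L : Set (List A), ρ (K ∪ L) = ρ K + ρ L)
    (L : Set (List A)) (r : R) :
    r ∈ OptImp (· ∈ D) L ρ ↔
      ∃ w ∈ L, ∃ K : Set (List A), (∀ u ∈ K, CanPre D w u) ∧ hle r (ρ K) := by
  constructor
  · intro hr
    obtain ⟨_, ⟨w, hwL, rfl⟩, hrK⟩ := hr _ (isCoverIn_image_upperSetOf hfin hlat L)
    exact ⟨w, hwL, upperSetOf D w, fun _ hu => mem_upperSetOf_iff.1 hu, hrK⟩
  · rintro ⟨w, hwL, K, hK, hrK⟩ Ks ⟨-, hKsD, hKscov⟩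
    obtain ⟨K', hK'Ks, hwK'⟩ := hKscov hwL
    have hKK' : K ⊆ K' := fun u hu => hK u hu K' (hKsD K' hK'Ks) hwK'
    exact ⟨K', hK'Ks, hle_trans hrK (hle_of_subset hadd hKK')⟩

/-- For a finite lattice `D`: `r ∈ I_D[L, ρ]` iff there are `w ∈ L` and `K ⊆ A*` with
`w ≤_D u` for all `u ∈ K` and `r ≤ ρ(K)`. -/
theorem stmt17 {A R : Type*} [NonUnitalSemiring R] [Finite R]
    (hid : ∀ r : R, r + r = r)
    (D : Set (Set (List A))) (hfin : D.Finite) (hlat : IsLatticeClass D)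
    (ρ : Set (List A) → R) (h0 : ρ ∅ = 0)
    (hadd : ∀ K L : Set (List A), ρ (K ∪ L) = ρ K + ρ L)
    (hmul : ∀ K L : Set (List A), ρ (lcat K L) = ρ K * ρ L)
    (L : Set (List A)) (r : R) :
    r ∈ OptImp (· ∈ D) L ρ ↔
      ∃ w ∈ L, ∃ K : Set (List A), (∀ u ∈ K, CanPre D w u) ∧ hle r (ρ K) :=
  stmt17_general D hfin hlat ρ hadd L r
end
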